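/- Let N be the maximum arity of any function symbol and let R = {p : ∃ q ∈ D(L), ∃ r, ∃ i with 1 ≤ i ≤ N, r.p = q.i}, where D(L) is the set of positions of the patterns in L. Then for every reachable state s of the set automaton, all match obligation positions of s lie in R; consequently the set of reachable states is finite. -/

import Mathlib

/-!
Every goal of a reachable state is admissible: its obligation consists of subterms of its
announced pattern, sitting below the announcement position at positions of `R`. New obligation
positions arise only as `L s ++ [i]` with `i ≤ ar f ≤ N`, and the root-label condition puts
`L s` in the domain of a pattern, so they lie in `R`; lifting only strips prefixes, and `R` is
closed under suffixes. Admissible goals draw their obligations from a finite set of pairs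
(subpattern, position in `R`), their patterns from `pats` and their announcement positions from
the prefixes of `R`, so there are finitely many of them, hence finitely many reachable states.
-/

/-- A position is a finite list of positive natural numbers. -/
abbrev Pos : Type := List ℕ+

/-- `below p q` (written `p ≤ q` in the paper) holds iff `q` is a prefix of `p`. -/
def below (p q : Pos) : Prop := ∃ q'' : Pos, p = q ++ q''

/-- Terms over a signature `F`, with a single variable `ω` (patterns are linear). -/
inductive Tm (F : Type) : Type
  | var : Tm F
  | app : F → List (Tm F) → Tm F

variable {F : Type}

/-- Head symbol of a term (none for the variable). -/
def hd : Tm F → Option F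
  | .var => none
  | .app f _ => some f

/-- The subterm of `t` at position `p`, if `p` is in the domain of `t`. -/
def subtermAt : Tm F → Pos → Option (Tm F)
  | t, [] => some t
  | .var, _ :: _ => none
  | .app _ ts, i :: p => (ts[(i : ℕ) - 1]?).bind (fun u => subtermAt u p)

/-- The domain (set of positions) of a term. -/
def Dom (t : Tm F) : Set Pos := {p | (subtermAt t p).isSome}

/-- `t` is a closed term: it contains no variable. -/
def Closed (t : Tm F) : Prop := ∀ p u, subtermAt t p = some u → u ≠ Tm.var

/-- Terms that respect the arity function of the signature. -/
inductive WF (ar : F → ℕ) : Tm F → Prop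
  | var : WF ar Tm.var
  | app : ∀ f ts, ts.length = ar f → (∀ u ∈ ts, WF ar u) → WF ar (Tm.app f ts)

/-- Pattern `ℓ` matches term `t` at position `p`: for every non-variable
position `p'` of `ℓ`, the head symbols of `t[p.p']` and `ℓ[p']` agree. -/
def Matches (ℓ t : Tm F) (p : Pos) : Prop :=
  ∀ p' u, subtermAt ℓ p' = some u → u ≠ Tm.var →
    ∃ v, subtermAt t (p ++ p') = some v ∧ hd v = hd u

/-- A match obligation: a set of (subpattern, position) pairs. -/
abbrev Obl (F : Type) := Set (Tm F × Pos)
/-- A match goal: a match obligation together with a match announcement. -/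
abbrev Goal (F : Type) := Obl F × (Tm F × Pos)
/-- A state of the set automaton: a set of match goals. -/
abbrev St (F : Type) := Set (Goal F)

/-- The positions of a match obligation. -/
def posOf (mo : Obl F) : Set Pos := {p | ∃ u, (u, p) ∈ mo}

/-- All match obligation positions of a state. -/
def posMO (s : St F) : Set Pos := {p | ∃ g ∈ s, p ∈ posOf g.1}

/-- Reduction of a match obligation after observing a symbol of arity `n`
at position `p`: pairs at other positions are kept, and the pair at `p` is
replaced by obligations for its non-variable arguments. -/
def reduce (mo : Obl F) (n : ℕ) (p : Pos) : Obl F :=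
  {x | x ∈ mo ∧ x.2 ≠ p} ∪
  {x | ∃ (ℓ u : Tm F) (i : ℕ+), (ℓ, p) ∈ mo ∧ (i : ℕ) ≤ n ∧
        subtermAt ℓ [i] = some u ∧ u ≠ Tm.var ∧ x = (u, p ++ [i])}

/-- The `f`-derivative of state `s` labelled with position `lab`:
unchanged goals, reduced goals and fresh goals. -/
def derivS (pats : Set (Tm F)) (ar : F → ℕ) (s : St F) (lab : Pos) (f : F) : St F :=
  {g | g ∈ s ∧ lab ∉ posOf g.1} ∪
  {g | ∃ mo ma, (mo, ma) ∈ s ∧ (∃ ℓ, (ℓ, lab) ∈ mo ∧ hd ℓ = some f) ∧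
        reduce mo (ar f) lab ≠ ∅ ∧ g = (reduce mo (ar f) lab, ma)} ∪
  {g | ∃ (ℓ : Tm F) (i : ℕ+), ℓ ∈ pats ∧ (i : ℕ) ≤ ar f ∧
        g = ({(ℓ, lab ++ [i])}, (ℓ, lab ++ [i]))}

/-- The direct dependency relation: the obligation position sets intersect. -/
def dirDep (g₁ g₂ : Goal F) : Prop := (posOf g₁.1 ∩ posOf g₂.1).Nonempty

/-- `K` is an equivalence class of `X` under the transitive closure of the
direct dependency relation restricted to `X`. -/
def IsClass (X K : St F) : Prop :=
  ∃ g ∈ X, K = {g' | g' ∈ X ∧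
    Relation.ReflTransGen (fun a b => a ∈ X ∧ b ∈ X ∧ dirDep a b) g g'}

/-- The match announcement positions of a set of goals. -/
def posMA (K : St F) : Set Pos := {p | ∃ mo ℓ, (mo, (ℓ, p)) ∈ K}

/-- `g` is the greatest common prefix (join) of the set of positions `P`. -/
def IsGcp (P : Set Pos) (g : Pos) : Prop :=
  (∀ p ∈ P, below p g) ∧ ∀ r : Pos, (∀ p ∈ P, below p r) → below g r

/-- Lift a match goal by stripping the common prefix `g` from all positions. -/
def liftGoal (g : Pos) (x : Goal F) : Goal F :=
  ((fun y : Tm F × Pos => (y.1, y.2.drop g.length)) '' x.1,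
   (x.2.1, x.2.2.drop g.length))

/-- Lift a set of match goals. -/
def liftSt (g : Pos) (K : St F) : St F := liftGoal g '' K

/-- The transition function of the set automaton: `(s', p') ∈ delta pats ar L s f`
iff `s'` is the lifting of a dependency class `K` of the derivative and `p'` is
the greatest common prefix of the announcement positions of `K`. -/
def delta (pats : Set (Tm F)) (ar : F → ℕ) (L : St F → Pos) (s : St F) (f : F) :
    Set (St F × Pos) :=
  {x | ∃ K, IsClass (derivS pats ar s (L s) f) K ∧ IsGcp (posMA K) x.2 ∧
        x.1 = liftSt x.2 K}

/-- The initial state: all fresh root goals. -/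
def initSt (pats : Set (Tm F)) : St F :=
  {g | ∃ ℓ ∈ pats, g = ({(ℓ, ([] : Pos))}, (ℓ, ([] : Pos)))}

/-- Reachable states of the set automaton. -/
inductive Reachable (pats : Set (Tm F)) (ar : F → ℕ) (L : St F → Pos) : St F → Prop
  | init : Reachable pats ar L (initSt pats)
  | step : ∀ s f s' p, Reachable pats ar L s →
      (s', p) ∈ delta pats ar L s f → Reachable pats ar L s'

/-- The labelling function `L` picks, for every reachable state, an obligation
position of one of its root goals. -/
def RootLabel (pats : Set (Tm F)) (ar : F → ℕ) (L : St F → Pos) : Prop :=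
  ∀ s, Reachable pats ar L s →
    ∃ mo ℓ, (mo, (ℓ, ([] : Pos))) ∈ s ∧ L s ∈ posOf mo

/-- The nodes of the evaluation tree `ET_M(t)`. -/
inductive Node (pats : Set (Tm F)) (ar : F → ℕ) (L : St F → Pos) (t : Tm F) :
    St F → Pos → Prop
  | root : Node pats ar L t (initSt pats) []
  | step : ∀ s p f s' p', Node pats ar L t s p →
      (∃ v, subtermAt t (p ++ L s) = some v ∧ hd v = some f) →
      (s', p') ∈ delta pats ar L s f →
      Node pats ar L t s' (p ++ p')

/-- The edges of the evaluation tree `ET_M(t)`. -/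
def EdgeRel (pats : Set (Tm F)) (ar : F → ℕ) (L : St F → Pos) (t : Tm F)
    (s : St F) (p : Pos) (s' : St F) (q : Pos) : Prop :=
  Node pats ar L t s p ∧ ∃ f p',
    (∃ v, subtermAt t (p ++ L s) = some v ∧ hd v = some f) ∧
    (s', p') ∈ delta pats ar L s f ∧ q = p ++ p'

/-- The work set `W(s,p)`: the positions of `t` below the position pointer that
still have to be inspected. -/
def Work (t : Tm F) (s : St F) (p : Pos) : Set Pos :=
  {x | ∃ q, x = p ++ q ∧ x ∈ Dom t ∧ ∃ r ∈ posMO s, below q r}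

/-- The output function: match announcements whose obligation is completed by
observing `f` at the label position. -/
def outS (ar : F → ℕ) (L : St F → Pos) (s : St F) (f : F) : Set (Tm F × Pos) :=
  {ma | ({(Tm.app f (List.replicate (ar f) Tm.var), L s)}, ma) ∈ s}

theorem subtermAt_nil (t : Tm F) : subtermAt t [] = some t := by
  cases t <;> rfl

theorem subtermAt_append (t : Tm F) (p q : Pos) :
    subtermAt t (p ++ q) = (subtermAt t p).bind (subtermAt · q) := by
  induction p generalizing t with
  | nil => simp [subtermAt_nil]
  | cons i p ih =>
    cases t with
    | var => simp [subtermAt]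
    | app f ts => simp [subtermAt, ih, Option.bind_assoc]

theorem mem_Dom_of_subtermAt_eq_some {t u : Tm F} {p : Pos} (h : subtermAt t p = some u) :
    p ∈ Dom t := by
  simp [Dom, h]

theorem Dom_finite : ∀ t : Tm F, (Dom t).Finite
  | .var => by
    refine (Set.finite_singleton []).subset fun p hp => ?_
    cases p with
    | nil => rfl
    | cons i p => simp [Dom, subtermAt] at hp
  | .app f ts => by
    have hsub : Dom (Tm.app f ts) ⊆ insert [] (⋃ u ∈ {u | u ∈ ts},
        ⋃ i ∈ {i : ℕ+ | (i : ℕ) ≤ ts.length}, (i :: ·) '' Dom u) := by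
      rintro (_ | ⟨i, p⟩) hp
      · exact Set.mem_insert _ _
      · obtain ⟨v, hv⟩ := Option.isSome_iff_exists.mp hp
        obtain ⟨u, hu, hp⟩ := Option.bind_eq_some_iff.mp hv
        have hlt := (List.getElem?_eq_some_iff.mp hu).1
        refine Or.inr (Set.mem_biUnion (List.mem_of_getElem? hu) (Set.mem_biUnion
          (show (i : ℕ) ≤ ts.length by omega) ⟨p, mem_Dom_of_subtermAt_eq_some hp, rfl⟩))
    exact (((List.finite_toSet ts).biUnion fun u hu =>
      ((Set.finite_Iic ts.length).preimage PNat.coe_injective.injOn).biUnion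
        fun i _ => (Dom_finite u).image _).insert _).subset hsub
decreasing_by exact (List.sizeOf_lt_of_mem hu).trans_le (by simp)

/-- The set `R` of the paper. -/
def boundSet (pats : Set (Tm F)) (N : ℕ) : Set Pos :=
  {p : Pos | ∃ q, (∃ ℓ ∈ pats, q ∈ Dom ℓ) ∧
    ∃ (r : Pos) (i : ℕ+), (i : ℕ) ≤ N ∧ r ++ p = q ++ [i]}

section boundSet

variable {pats : Set (Tm F)} {N : ℕ}

theorem mem_boundSet_of_isSuffix {p p' : Pos} (h : p ∈ boundSet pats N) (hs : p' <:+ p) :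
    p' ∈ boundSet pats N := by
  obtain ⟨q, hq, r, i, hi, hr⟩ := h
  obtain ⟨r', rfl⟩ := hs
  exact ⟨q, hq, r ++ r', i, hi, by rw [List.append_assoc, hr]⟩

theorem append_singleton_mem_boundSet {ℓ : Tm F} (hℓ : ℓ ∈ pats) {q : Pos} (hq : q ∈ Dom ℓ)
    {i : ℕ+} (hi : (i : ℕ) ≤ N) : q ++ [i] ∈ boundSet pats N :=
  ⟨q, ⟨ℓ, hℓ, hq⟩, [], i, hi, rfl⟩

theorem nil_mem_boundSet {ℓ : Tm F} (hℓ : ℓ ∈ pats) (hN : 1 ≤ N) : [] ∈ boundSet pats N :=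
  mem_boundSet_of_isSuffix
    (append_singleton_mem_boundSet (i := 1) hℓ (mem_Dom_of_subtermAt_eq_some (subtermAt_nil ℓ)) hN)
    List.nil_suffix

theorem boundSet_finite (hfin : pats.Finite) : (boundSet pats N).Finite := by
  have hsub : boundSet pats N ⊆ ⋃ q ∈ ⋃ ℓ ∈ pats, Dom ℓ, ⋃ i ∈ {i : ℕ+ | (i : ℕ) ≤ N},
      {p : Pos | p ∈ (q ++ [i]).tails} := by
    rintro p ⟨q, ⟨ℓ, hℓ, hq⟩, r, i, hi, hr⟩
    exact Set.mem_biUnion (Set.mem_biUnion hℓ hq)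
      (Set.mem_biUnion (show (i : ℕ) ≤ N from hi) ((List.mem_tails _ _).mpr ⟨r, hr⟩))
  exact ((hfin.biUnion fun ℓ _ => Dom_finite ℓ).biUnion fun q _ =>
    ((Set.finite_Iic N).preimage PNat.coe_injective.injOn).biUnion
      fun i _ => List.finite_toSet _).subset hsub

end boundSet

structure AdmissibleGoal (pats : Set (Tm F)) (N : ℕ) (x : Goal F) : Prop where
  pattern_mem : x.2.1 ∈ pats
  nonempty : x.1.Nonempty
  subtermAt_eq : ∀ y ∈ x.1, ∃ q, subtermAt x.2.1 q = some y.1 ∧ y.2 = x.2.2 ++ q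
  mem_boundSet : ∀ y ∈ x.1, y.2 ∈ boundSet pats N

namespace AdmissibleGoal

variable {pats : Set (Tm F)} {N : ℕ}

theorem fresh {ℓ : Tm F} (hℓ : ℓ ∈ pats) {p : Pos} (hp : p ∈ boundSet pats N) :
    AdmissibleGoal pats N ({(ℓ, p)}, (ℓ, p)) where
  pattern_mem := hℓ
  nonempty := Set.singleton_nonempty _
  subtermAt_eq := by
    rintro _ rfl
    exact ⟨[], subtermAt_nil ℓ, (List.append_nil p).symm⟩
  mem_boundSet := by
    rintro _ rfl
    exact hp

theorem exists_mem_Dom_of_mem_posOf {x : Goal F} (h : AdmissibleGoal pats N x) {p : Pos} (hp : p ∈ posOf x.1) :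
    ∃ q ∈ Dom x.2.1, p = x.2.2 ++ q := by
  obtain ⟨u, hu⟩ := hp
  obtain ⟨q, hq, rfl⟩ := h.subtermAt_eq _ hu
  exact ⟨q, mem_Dom_of_subtermAt_eq_some hq, rfl⟩

theorem reduce {mo : Obl F} {ma : Tm F × Pos} (h : AdmissibleGoal pats N (mo, ma)) {n : ℕ}
    {p : Pos} (hne : _root_.reduce mo n p ≠ ∅)
    (hp : ∀ i : ℕ+, (i : ℕ) ≤ n → p ++ [i] ∈ boundSet pats N) :
    AdmissibleGoal pats N (_root_.reduce mo n p, ma) where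
  pattern_mem := h.pattern_mem
  nonempty := Set.nonempty_iff_ne_empty.mpr hne
  subtermAt_eq := by
    rintro y (⟨hy, -⟩ | ⟨ℓ, u, i, hℓ, -, hu, -, rfl⟩)
    · exact h.subtermAt_eq y hy
    · obtain ⟨q, hq, rfl⟩ := h.subtermAt_eq _ hℓ
      exact ⟨q ++ [i], by rw [subtermAt_append, hq]; exact hu, List.append_assoc _ _ _⟩
  mem_boundSet := by
    rintro y (⟨hy, -⟩ | ⟨ℓ, u, i, -, hi, -, -, rfl⟩)
    · exact h.mem_boundSet y hy
    · exact hp i hi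

theorem liftGoal {x : Goal F} (h : AdmissibleGoal pats N x) {g : Pos} (hg : below x.2.2 g) :
    AdmissibleGoal pats N (_root_.liftGoal g x) := by
  obtain ⟨g', hg'⟩ := hg
  have hdrop : x.2.2.drop g.length = g' := by rw [hg', List.drop_left]
  have hdrop_append (q : Pos) : (x.2.2 ++ q).drop g.length = g' ++ q := by
    rw [hg', List.append_assoc, List.drop_left]
  refine ⟨h.pattern_mem, h.nonempty.image _, ?_, ?_⟩
  · rintro _ ⟨y, hy, rfl⟩
    obtain ⟨q, hq, hyq⟩ := h.subtermAt_eq y hy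
    refine ⟨q, hq, ?_⟩
    show y.2.drop g.length = x.2.2.drop g.length ++ q
    rw [hyq, hdrop_append, hdrop]
  · rintro _ ⟨y, hy, rfl⟩
    refine mem_boundSet_of_isSuffix (h.mem_boundSet y hy) ⟨g, ?_⟩
    obtain ⟨q, -, hyq⟩ := h.subtermAt_eq y hy
    show g ++ y.2.drop g.length = y.2
    rw [hyq, hdrop_append, hg', List.append_assoc]

end AdmissibleGoal

theorem IsClass.subset {X K : St F} (h : IsClass X K) : K ⊆ X := by
  obtain ⟨g, -, rfl⟩ := h
  exact fun _ hx => hx.1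

section Automaton

variable {pats : Set (Tm F)} {ar : F → ℕ} {N : ℕ}

theorem AdmissibleGoal.of_mem_derivS {s : St F} {lab : Pos} {f : F}
    (hs : ∀ x ∈ s, AdmissibleGoal pats N x)
    (hlab : ∀ i : ℕ+, (i : ℕ) ≤ ar f → lab ++ [i] ∈ boundSet pats N) :
    ∀ x ∈ derivS pats ar s lab f, AdmissibleGoal pats N x := by
  rintro x ((⟨hx, -⟩ | ⟨mo, ma, hmo, -, hne, rfl⟩) | ⟨ℓ, i, hℓ, hi, rfl⟩)
  · exact hs x hx
  · exact (hs _ hmo).reduce hne hlab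
  · exact AdmissibleGoal.fresh hℓ (hlab i hi)

theorem AdmissibleGoal.of_mem_delta {L : St F → Pos} {s s' : St F} {f : F} {p : Pos}
    (hs : ∀ x ∈ derivS pats ar s (L s) f, AdmissibleGoal pats N x)
    (hδ : (s', p) ∈ delta pats ar L s f) : ∀ x ∈ s', AdmissibleGoal pats N x := by
  obtain ⟨K, hK, hgcp, hs' : s' = liftSt p K⟩ := hδ
  rw [hs']
  rintro _ ⟨x, hx, rfl⟩
  exact (hs x (hK.subset hx)).liftGoal (hgcp.1 _ ⟨x.1, x.2.1, hx⟩)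

theorem Reachable.forall_admissibleGoal {L : St F → Pos} (hN1 : 1 ≤ N) (hN : ∀ f, ar f ≤ N)
    (hL : RootLabel pats ar L) {s : St F} (hs : Reachable pats ar L s) :
    ∀ x ∈ s, AdmissibleGoal pats N x := by
  induction hs with
  | init =>
    rintro _ ⟨ℓ, hℓ, rfl⟩
    exact AdmissibleGoal.fresh hℓ (nil_mem_boundSet hℓ hN1)
  | step s f s' p hs hδ ih =>
    -- the label is an obligation position of a root goal, hence a position of its pattern
    obtain ⟨mo, ℓ, hroot, hlab⟩ := hL s hs
    obtain ⟨q, hq, hlabq⟩ := (ih _ hroot).exists_mem_Dom_of_mem_posOf hlab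
    have hlabDom : L s ∈ Dom ℓ := by rwa [hlabq, List.nil_append]
    refine AdmissibleGoal.of_mem_delta (AdmissibleGoal.of_mem_derivS ih fun i hi => ?_) hδ
    exact append_singleton_mem_boundSet (ih _ hroot).pattern_mem hlabDom (hi.trans (hN f))

end Automaton

theorem finite_setOf_subtermAt_eq_some (t : Tm F) :
    {u | ∃ q, subtermAt t q = some u}.Finite :=
  ((Dom_finite t).image fun q => (subtermAt t q).getD Tm.var).subset
    fun u ⟨q, hq⟩ => ⟨q, mem_Dom_of_subtermAt_eq_some hq, by simp [hq]⟩

theorem finite_setOf_admissibleGoal {pats : Set (Tm F)} (hfin : pats.Finite) (N : ℕ) :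
    {x : Goal F | AdmissibleGoal pats N x}.Finite := by
  set R := boundSet pats N
  set subpatterns := ⋃ ℓ ∈ pats, {u | ∃ q, subtermAt ℓ q = some u}
  set prefixes := ⋃ p ∈ R, {pa : Pos | pa ∈ p.inits}
  have hsub : {x : Goal F | AdmissibleGoal pats N x} ⊆
      {mo | mo ⊆ subpatterns ×ˢ R} ×ˢ (pats ×ˢ prefixes) := by
    intro x hx
    obtain ⟨y, hy⟩ := hx.nonempty
    obtain ⟨q, -, hyq⟩ := hx.subtermAt_eq y hy
    refine ⟨fun z hz => ⟨?_, hx.mem_boundSet z hz⟩, hx.pattern_mem, Set.mem_biUnion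
      (hx.mem_boundSet y hy) ((List.mem_inits _ _).mpr ⟨q, hyq.symm⟩)⟩
    obtain ⟨q', hq', -⟩ := hx.subtermAt_eq z hz
    exact Set.mem_biUnion hx.pattern_mem ⟨q', hq'⟩
  have hR : R.Finite := boundSet_finite hfin
  exact (((hfin.biUnion fun ℓ _ => finite_setOf_subtermAt_eq_some ℓ).prod hR).finite_subsets.prod
    (hfin.prod (hR.biUnion fun p _ => List.finite_toSet _))).subset hsub

theorem posMO_bounded_and_finitely_many_states_general {F : Type} (pats : Set (Tm F))
    (ar : F → ℕ) (L : St F → Pos) (N : ℕ) (hN1 : 1 ≤ N) (hN : ∀ f, ar f ≤ N)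
    (hfin : pats.Finite)
    (hL : RootLabel pats ar L) :
    (∀ s, Reachable pats ar L s → posMO s ⊆
      {p : Pos | ∃ q, (∃ ℓ ∈ pats, q ∈ Dom ℓ) ∧
        ∃ (r : Pos) (i : ℕ+), (i : ℕ) ≤ N ∧ r ++ p = q ++ [i]}) ∧
    {s : St F | Reachable pats ar L s}.Finite := by
  have hadm (s : St F) (hs : Reachable pats ar L s) : ∀ x ∈ s, AdmissibleGoal pats N x :=
    hs.forall_admissibleGoal hN1 hN hL
  refine ⟨fun s hs p ⟨x, hx, u, hu⟩ => (hadm s hs x hx).mem_boundSet _ hu, ?_⟩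
  exact (finite_setOf_admissibleGoal hfin N).finite_subsets.subset fun s hs => hadm s hs

/-- All match obligation positions of reachable states lie in the finite set
`R = {p | ∃ q ∈ D(L), ∃ r, ∃ i ≤ N, r.p = q.i}`; consequently there are only
finitely many reachable states. -/
theorem posMO_bounded_and_finitely_many_states {F : Type} (pats : Set (Tm F))
    (ar : F → ℕ) (L : St F → Pos) (N : ℕ) (hN1 : 1 ≤ N) (hN : ∀ f, ar f ≤ N)
    (hfin : pats.Finite) (hpats : pats.Nonempty)
    (hWF : ∀ ℓ ∈ pats, WF ar ℓ) (hpv : ∀ ℓ ∈ pats, ℓ ≠ Tm.var)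
    (hL : RootLabel pats ar L) :
    (∀ s, Reachable pats ar L s → posMO s ⊆
      {p : Pos | ∃ q, (∃ ℓ ∈ pats, q ∈ Dom ℓ) ∧
        ∃ (r : Pos) (i : ℕ+), (i : ℕ) ≤ N ∧ r ++ p = q ++ [i]}) ∧
    {s : St F | Reachable pats ar L s}.Finite :=
  posMO_bounded_and_finitely_many_states_general pats ar L N hN1 hN hfin hL
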